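/- arXiv:math/0408218 — 3 statements merged into one kernel-verified Lean document; each statement's English description precedes it below -/
import Mathlib

section
/- Let A be an associative unital algebra over ℂ with a full comultiplication Δ, admitting a faithful left integral φ and a faithful right integral, and let S : A → A be the linear map determined by S((id ⊗ φ)(Δ(a)(1 ⊗ b))) = (id ⊗ φ)((1 ⊗ a)Δ(b)) for all a, b ∈ A. Then (S ⊗ S)(Δ(a)) = σ(Δ(S(a))) for all a ∈ A, where σ is the flip map on A ⊗ A. -/
open TensorProduct

noncomputable section

variable {A : Type*} [Ring A] [Algebra ℂ A]

/-- The slice map `id ⊗ ω : A ⊗ A → A`. -/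
def sliceR (ω : A →ₗ[ℂ] ℂ) : A ⊗[ℂ] A →ₗ[ℂ] A :=
  (TensorProduct.rid ℂ A).toLinearMap ∘ₗ TensorProduct.map LinearMap.id ω

/-- The slice map `ω ⊗ id : A ⊗ A → A`. -/
def sliceL (ω : A →ₗ[ℂ] ℂ) : A ⊗[ℂ] A →ₗ[ℂ] A :=
  (TensorProduct.lid ℂ A).toLinearMap ∘ₗ TensorProduct.map ω LinearMap.id

/-- Coassociativity of a comultiplication `Δ : A → A ⊗ A`:
`(Δ ⊗ id) ∘ Δ = (id ⊗ Δ) ∘ Δ` (up to the associator). -/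
def IsCoassoc (Δ : A →ₐ[ℂ] A ⊗[ℂ] A) : Prop :=
  ∀ a : A,
    TensorProduct.assoc ℂ A A A (TensorProduct.map Δ.toLinearMap LinearMap.id (Δ a)) =
      TensorProduct.map LinearMap.id Δ.toLinearMap (Δ a)

/-- A left integral: a nonzero functional with `(id ⊗ φ)(Δ a) = φ(a)·1` for all `a`. -/
def IsLeftIntegral (Δ : A →ₐ[ℂ] A ⊗[ℂ] A) (φ : A →ₗ[ℂ] ℂ) : Prop :=
  φ ≠ 0 ∧ ∀ a : A, sliceR φ (Δ a) = φ a • (1 : A)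

/-- A right integral: a nonzero functional with `(ψ ⊗ id)(Δ a) = ψ(a)·1` for all `a`. -/
def IsRightIntegral (Δ : A →ₐ[ℂ] A ⊗[ℂ] A) (ψ : A →ₗ[ℂ] ℂ) : Prop :=
  ψ ≠ 0 ∧ ∀ a : A, sliceL ψ (Δ a) = ψ a • (1 : A)

/-- A faithful functional: the bilinear form `(a, b) ↦ ω(ab)` is non-degenerate. -/
def IsFaithful (ω : A →ₗ[ℂ] ℂ) : Prop :=
  (∀ b : A, (∀ a : A, ω (a * b) = 0) → b = 0) ∧
  (∀ b : A, (∀ a : A, ω (b * a) = 0) → b = 0)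

/-- The left leg of an element `x ∈ A ⊗ A`: the span of `{(id ⊗ ω)(x) : ω ∈ A*}`. -/
def leftLegOf (x : A ⊗[ℂ] A) : Submodule ℂ A :=
  Submodule.span ℂ {y : A | ∃ ω : A →ₗ[ℂ] ℂ, y = sliceR ω x}

/-- The right leg of an element `x ∈ A ⊗ A`: the span of `{(ω ⊗ id)(x) : ω ∈ A*}`. -/
def rightLegOf (x : A ⊗[ℂ] A) : Submodule ℂ A :=
  Submodule.span ℂ {y : A | ∃ ω : A →ₗ[ℂ] ℂ, y = sliceL ω x}

/-- The left leg of `Δ`: the span of `{(id ⊗ ω)(Δ a) : a ∈ A, ω ∈ A*}`. -/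
def leftLeg (Δ : A →ₐ[ℂ] A ⊗[ℂ] A) : Submodule ℂ A :=
  Submodule.span ℂ {y : A | ∃ (a : A) (ω : A →ₗ[ℂ] ℂ), y = sliceR ω (Δ a)}

/-- The right leg of `Δ`: the span of `{(ω ⊗ id)(Δ a) : a ∈ A, ω ∈ A*}`. -/
def rightLeg (Δ : A →ₐ[ℂ] A ⊗[ℂ] A) : Submodule ℂ A :=
  Submodule.span ℂ {y : A | ∃ (a : A) (ω : A →ₗ[ℂ] ℂ), y = sliceL ω (Δ a)}

/-- A comultiplication is full if both of its legs are all of `A`. -/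
def IsFull (Δ : A →ₐ[ℂ] A ⊗[ℂ] A) : Prop :=
  leftLeg Δ = ⊤ ∧ rightLeg Δ = ⊤

/-- The linear map `T₁` with `T₁ (a ⊗ b) = Δ(a) * (1 ⊗ b)`. -/
def T1 (Δ : A →ₐ[ℂ] A ⊗[ℂ] A) : A ⊗[ℂ] A →ₗ[ℂ] A ⊗[ℂ] A :=
  LinearMap.mul' ℂ (A ⊗[ℂ] A) ∘ₗ
    TensorProduct.map Δ.toLinearMap (TensorProduct.mk ℂ A A 1)

/-- The linear map `T₁'` with `T₁' (a ⊗ b) = Δ(a) * (b ⊗ 1)`. -/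
def T1' (Δ : A →ₐ[ℂ] A ⊗[ℂ] A) : A ⊗[ℂ] A →ₗ[ℂ] A ⊗[ℂ] A :=
  LinearMap.mul' ℂ (A ⊗[ℂ] A) ∘ₗ
    TensorProduct.map Δ.toLinearMap ((TensorProduct.mk ℂ A A).flip 1)

/-- The linear map `T₂` with `T₂ (a ⊗ b) = (a ⊗ 1) * Δ(b)`. -/
def T2 (Δ : A →ₐ[ℂ] A ⊗[ℂ] A) : A ⊗[ℂ] A →ₗ[ℂ] A ⊗[ℂ] A :=
  LinearMap.mul' ℂ (A ⊗[ℂ] A) ∘ₗ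
    TensorProduct.map ((TensorProduct.mk ℂ A A).flip 1) Δ.toLinearMap

/-- The linear map `T₂'` with `T₂' (a ⊗ b) = (1 ⊗ a) * Δ(b)`. -/
def T2' (Δ : A →ₐ[ℂ] A ⊗[ℂ] A) : A ⊗[ℂ] A →ₗ[ℂ] A ⊗[ℂ] A :=
  LinearMap.mul' ℂ (A ⊗[ℂ] A) ∘ₗ
    TensorProduct.map (TensorProduct.mk ℂ A A 1) Δ.toLinearMap

/-- A left cointegral: a nonzero element `h` with `Δ(a)(1 ⊗ h) = a ⊗ h` for all `a`. -/
def IsLeftCointegral (Δ : A →ₐ[ℂ] A ⊗[ℂ] A) (h : A) : Prop :=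
  h ≠ 0 ∧ ∀ a : A, Δ a * ((1 : A) ⊗ₜ[ℂ] h) = a ⊗ₜ[ℂ] h

/-- A right cointegral: a nonzero element `k` with `(k ⊗ 1)Δ(a) = k ⊗ a` for all `a`. -/
def IsRightCointegral (Δ : A →ₐ[ℂ] A ⊗[ℂ] A) (k : A) : Prop :=
  k ≠ 0 ∧ ∀ a : A, (k ⊗ₜ[ℂ] (1 : A)) * Δ a = k ⊗ₜ[ℂ] a

/-- `Δ₁₃(a) = (1 ⊗ σ)(Δ(a) ⊗ 1)`, viewed in `A ⊗ (A ⊗ A)`. -/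
def delta13 (Δ : A →ₐ[ℂ] A ⊗[ℂ] A) (a : A) : A ⊗[ℂ] (A ⊗[ℂ] A) :=
  TensorProduct.map LinearMap.id (TensorProduct.comm ℂ A A).toLinearMap
    (TensorProduct.assoc ℂ A A A (Δ a ⊗ₜ[ℂ] (1 : A)))

/-! ### Auxiliary lemmas for the antipode theorem -/

set_option synthInstance.maxHeartbeats 1600000
set_option maxHeartbeats 3200000

section AntipodeAux

lemma sliceR_tmul (ω : A →ₗ[ℂ] ℂ) (a b : A) : sliceR ω (a ⊗ₜ[ℂ] b) = ω b • a := by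
  simp [sliceR]

lemma sliceR_mul_right (ω : A →ₗ[ℂ] ℂ) (t : A ⊗[ℂ] A) (q : A) :
    sliceR ω (t * ((1:A) ⊗ₜ[ℂ] q)) = sliceR (ω ∘ₗ LinearMap.mulRight ℂ q) t := by
  induction t using TensorProduct.induction_on with
  | zero => simp
  | tmul a b => simp [Algebra.TensorProduct.tmul_mul_tmul, sliceR_tmul]
  | add x y hx hy => rw [add_mul, map_add, hx, hy, map_add]

lemma sliceR_mul_left (ω : A →ₗ[ℂ] ℂ) (t : A ⊗[ℂ] A) (p : A) :
    sliceR ω (((1:A) ⊗ₜ[ℂ] p) * t) = sliceR (ω ∘ₗ LinearMap.mulLeft ℂ p) t := by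
  induction t using TensorProduct.induction_on with
  | zero => simp
  | tmul a b => simp [Algebra.TensorProduct.tmul_mul_tmul, sliceR_tmul]
  | add x y hx hy => rw [mul_add, map_add, hx, hy, map_add]

/-- generalized right slice on `(A⊗A)⊗A`. -/
def rslice2 (ω : A →ₗ[ℂ] ℂ) : (A ⊗[ℂ] A) ⊗[ℂ] A →ₗ[ℂ] A ⊗[ℂ] A :=
  (TensorProduct.rid ℂ (A ⊗[ℂ] A)).toLinearMap ∘ₗ TensorProduct.map LinearMap.id ω

lemma rslice2_tmul (ω : A →ₗ[ℂ] ℂ) (u : A ⊗[ℂ] A) (c : A) :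
    rslice2 ω (u ⊗ₜ[ℂ] c) = ω c • u := by simp [rslice2]

lemma delta_sliceR (Δ : A →ₐ[ℂ] A ⊗[ℂ] A) (ω : A →ₗ[ℂ] ℂ) (t : A ⊗[ℂ] A) :
    Δ.toLinearMap (sliceR ω t) =
      rslice2 ω (TensorProduct.map Δ.toLinearMap LinearMap.id t) := by
  induction t using TensorProduct.induction_on with
  | zero => simp
  | tmul a b => simp [sliceR_tmul, rslice2_tmul]
  | add x y hx hy => simp only [map_add, hx, hy]

lemma rslice2_assoc_symm (ω : A →ₗ[ℂ] ℂ) (u : A ⊗[ℂ] (A ⊗[ℂ] A)) :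
    rslice2 ω ((TensorProduct.assoc ℂ A A A).symm u) =
      TensorProduct.map LinearMap.id (sliceR ω) u := by
  induction u using TensorProduct.induction_on with
  | zero => simp
  | tmul a v =>
    induction v using TensorProduct.induction_on with
    | zero => rw [TensorProduct.tmul_zero]; simp
    | tmul b c => simp [rslice2_tmul, sliceR_tmul, TensorProduct.tmul_smul]
    | add x y hx hy => simp only [TensorProduct.tmul_add, map_add, hx, hy]
  | add x y hx hy => simp only [map_add, hx, hy]

/-- Coassociativity in slice form: `Δ((id⊗ω)(Δa)) = (id ⊗ ((id⊗ω)∘Δ))(Δa)`. -/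
lemma delta_sliceR_delta (Δ : A →ₐ[ℂ] A ⊗[ℂ] A) (hΔ : IsCoassoc Δ) (ω : A →ₗ[ℂ] ℂ) (a : A) :
    Δ.toLinearMap (sliceR ω (Δ a)) =
      TensorProduct.map LinearMap.id (sliceR ω ∘ₗ Δ.toLinearMap) (Δ a) := by
  have h := hΔ a
  have h2 : TensorProduct.map Δ.toLinearMap LinearMap.id (Δ a)
      = (TensorProduct.assoc ℂ A A A).symm
          (TensorProduct.map LinearMap.id Δ.toLinearMap (Δ a)) := by
    rw [← h, LinearEquiv.symm_apply_apply]
  rw [delta_sliceR, h2, rslice2_assoc_symm]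
  have h3 : TensorProduct.map (LinearMap.id (M := A)) (sliceR ω ∘ₗ Δ.toLinearMap)
      = TensorProduct.map LinearMap.id (sliceR ω) ∘ₗ
        TensorProduct.map LinearMap.id Δ.toLinearMap := by
    rw [← TensorProduct.map_comp, LinearMap.id_comp]
  rw [h3, LinearMap.comp_apply]

/-- `c ↦ (id⊗φ)((1⊗c)·s)` as a linear map. -/
def Kmap (φ : A →ₗ[ℂ] ℂ) (s : A ⊗[ℂ] A) : A →ₗ[ℂ] A :=
  sliceR φ ∘ₗ LinearMap.mulRight ℂ s ∘ₗ TensorProduct.mk ℂ A A 1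

/-- `c ↦ (id⊗φ)(t·(1⊗c))` as a linear map. -/
def Gmap (φ : A →ₗ[ℂ] ℂ) (t : A ⊗[ℂ] A) : A →ₗ[ℂ] A :=
  sliceR φ ∘ₗ LinearMap.mulLeft ℂ t ∘ₗ TensorProduct.mk ℂ A A 1

lemma Kmap_apply (φ : A →ₗ[ℂ] ℂ) (s : A ⊗[ℂ] A) (c : A) :
    Kmap φ s c = sliceR φ (((1:A) ⊗ₜ[ℂ] c) * s) := rfl

lemma Gmap_apply (φ : A →ₗ[ℂ] ℂ) (t : A ⊗[ℂ] A) (c : A) :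
    Gmap φ t c = sliceR φ (t * ((1:A) ⊗ₜ[ℂ] c)) := rfl

lemma Kmap_add (φ : A →ₗ[ℂ] ℂ) (s₁ s₂ : A ⊗[ℂ] A) :
    Kmap φ (s₁ + s₂) = Kmap φ s₁ + Kmap φ s₂ := by
  ext c; simp [Kmap_apply, mul_add]

lemma Gmap_add (φ : A →ₗ[ℂ] ℂ) (t₁ t₂ : A ⊗[ℂ] A) :
    Gmap φ (t₁ + t₂) = Gmap φ t₁ + Gmap φ t₂ := by
  ext c; simp [Gmap_apply, add_mul]

lemma Kmap_zero (φ : A →ₗ[ℂ] ℂ) : Kmap φ (0 : A ⊗[ℂ] A) = 0 := by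
  ext c; simp [Kmap_apply]

lemma Gmap_zero (φ : A →ₗ[ℂ] ℂ) : Gmap φ (0 : A ⊗[ℂ] A) = 0 := by
  ext c; simp [Gmap_apply]

/-- The key bilinear rearrangement identity. -/
lemma cross (φ : A →ₗ[ℂ] ℂ) (S' : A →ₗ[ℂ] A) (t s : A ⊗[ℂ] A) :
    TensorProduct.map S' (Kmap φ s) t =
      TensorProduct.comm ℂ A A
        (TensorProduct.map LinearMap.id (S' ∘ₗ Gmap φ t) s) := by
  induction t using TensorProduct.induction_on with
  | zero => simp [Gmap_zero]
  | add x y hx hy =>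
    rw [map_add, hx, hy, Gmap_add, LinearMap.comp_add, TensorProduct.map_add_right,
      LinearMap.add_apply, map_add]
  | tmul a b =>
    induction s using TensorProduct.induction_on with
    | zero => simp [Kmap_zero]
    | add x y hx hy =>
      rw [Kmap_add, TensorProduct.map_add_right, LinearMap.add_apply, hx, hy,
        map_add, map_add]
    | tmul c d =>
      rw [TensorProduct.map_tmul, TensorProduct.map_tmul]
      simp only [LinearMap.comp_apply, LinearMap.id_coe, id_eq, Kmap_apply, Gmap_apply,
        Algebra.TensorProduct.tmul_mul_tmul, one_mul, mul_one, sliceR_tmul, map_smul,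
        TensorProduct.tmul_smul, TensorProduct.comm_tmul, TensorProduct.smul_tmul']

/-- Existence of `q` realizing any functional slice via `φ`. -/
lemma exists_slice_eq (φ : A →ₗ[ℂ] ℂ)
    (hφ2 : ∀ b : A, (∀ a : A, φ (b * a) = 0) → b = 0)
    (t : A ⊗[ℂ] A) (ω : A →ₗ[ℂ] ℂ) :
    ∃ q : A, sliceR ω t = sliceR φ (t * ((1:A) ⊗ₜ[ℂ] q)) := by
  obtain ⟨s, hs⟩ := TensorProduct.exists_finset t
  set Y : Submodule ℂ A := Submodule.span ℂ (Prod.snd '' (s : Set (A × A))) with hY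
  haveI : FiniteDimensional ℂ Y :=
    FiniteDimensional.span_of_finite ℂ (s.finite_toSet.image _)
  let B : Y →ₗ[ℂ] A →ₗ[ℂ] ℂ := LinearMap.mk₂ ℂ (fun y q => φ ((y : A) * q))
    (fun y₁ y₂ q => by simp [add_mul])
    (fun c y q => by simp [Submodule.coe_smul, smul_mul_assoc])
    (fun y q₁ q₂ => by simp [mul_add])
    (fun c y q => by simp [mul_smul_comm])
  have hBapp : ∀ (y : Y) (r : A), B y r = φ ((y : A) * r) := fun _ _ => rfl
  have hBinj : Function.Injective B := by
    rw [← LinearMap.ker_eq_bot, LinearMap.ker_eq_bot']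
    intro y hy
    have : (y : A) = 0 := hφ2 _ fun a => by
      have h := LinearMap.congr_fun hy a
      rw [hBapp] at h
      simpa using h
    exact Subtype.ext this
  have hsurj : Function.Surjective B.flip := LinearMap.flip_surjective_iff₁.mpr hBinj
  obtain ⟨q, hq⟩ := hsurj (ω ∘ₗ Y.subtype)
  refine ⟨q, ?_⟩
  rw [sliceR_mul_right, hs, map_sum, map_sum]
  refine Finset.sum_congr rfl fun i _hi => ?_
  rw [sliceR_tmul, sliceR_tmul]
  congr 1
  have hYi : i.2 ∈ Y := by
    rw [hY]
    exact Submodule.subset_span ⟨i, _hi, rfl⟩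
  have h := LinearMap.congr_fun hq ⟨i.2, hYi⟩
  have h' : φ (i.2 * q) = ω i.2 := h
  exact h'.symm

/-- The elements `(id⊗φ)(Δp · (1⊗q))` span `A`. -/
lemma span_slice_top (Δ : A →ₐ[ℂ] A ⊗[ℂ] A) (hfull : IsFull Δ)
    (φ : A →ₗ[ℂ] ℂ) (hφ2 : ∀ b : A, (∀ a : A, φ (b * a) = 0) → b = 0) :
    Submodule.span ℂ {x : A | ∃ p q : A, x = sliceR φ (Δ p * ((1:A) ⊗ₜ[ℂ] q))} = ⊤ := by
  rw [eq_top_iff, ← hfull.1]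
  unfold leftLeg
  rw [Submodule.span_le]
  rintro y ⟨p, ω, rfl⟩
  obtain ⟨q, hq⟩ := exists_slice_eq φ hφ2 (Δ p) ω
  rw [hq]
  exact Submodule.subset_span ⟨p, q, rfl⟩

end AntipodeAux

/-- The antipode `S` satisfies `(S ⊗ S)(Δ(a)) = σ(Δ(S(a)))` for all `a`. -/
theorem antipode_flips_comultiplication
    (Δ : A →ₐ[ℂ] A ⊗[ℂ] A) (hΔ : IsCoassoc Δ) (hfull : IsFull Δ)
    (φ : A →ₗ[ℂ] ℂ) (hφ : IsLeftIntegral Δ φ) (hφf : IsFaithful φ)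
    (ψ : A →ₗ[ℂ] ℂ) (hψ : IsRightIntegral Δ ψ) (hψf : IsFaithful ψ)
    (S : A →ₗ[ℂ] A)
    (hS : ∀ a b : A, S (sliceR φ (Δ a * ((1 : A) ⊗ₜ[ℂ] b))) =
      sliceR φ (((1 : A) ⊗ₜ[ℂ] a) * Δ b)) :
    ∀ a : A, TensorProduct.map S S (Δ a) = TensorProduct.comm ℂ A A (Δ (S a)) := by
  have hspan := span_slice_top Δ hfull φ hφf.2
  -- reformulate as equality of linear maps
  have key : (TensorProduct.map S S ∘ₗ Δ.toLinearMap)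
      = ((TensorProduct.comm ℂ A A).toLinearMap ∘ₗ Δ.toLinearMap ∘ₗ S) := by
    apply LinearMap.ext_on hspan
    rintro x ⟨p, q, rfl⟩
    simp only [LinearMap.comp_apply, LinearEquiv.coe_coe]
    -- notation
    set Gq : A →ₗ[ℂ] A := sliceR φ ∘ₗ LinearMap.mulRight ℂ ((1:A) ⊗ₜ[ℂ] q) ∘ₗ Δ.toLinearMap
      with hGq
    -- Step 1: Δ x = (id ⊗ Gq)(Δ p)
    have hfg1 : sliceR (φ ∘ₗ LinearMap.mulRight ℂ q) ∘ₗ Δ.toLinearMap = Gq := by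
      apply LinearMap.ext; intro c
      simp only [LinearMap.comp_apply, hGq, LinearMap.mulRight_apply]
      rw [← sliceR_mul_right]
    have h1 : Δ.toLinearMap (sliceR φ (Δ p * ((1:A) ⊗ₜ[ℂ] q)))
        = TensorProduct.map LinearMap.id Gq (Δ p) := by
      rw [sliceR_mul_right, delta_sliceR_delta Δ hΔ, hfg1]
    -- Step 2: (S⊗S)∘(id⊗Gq) = S ⊗ (S∘Gq) and S∘Gq = Kmap φ (Δ q)
    have h2 : S ∘ₗ Gq = Kmap φ (Δ q) := by
      ext c
      simp only [LinearMap.comp_apply, hGq, LinearMap.mulRight_apply, Kmap_apply]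
      exact hS c q
    have h3 : TensorProduct.map S S (TensorProduct.map LinearMap.id Gq (Δ p))
        = TensorProduct.map S (Kmap φ (Δ q)) (Δ p) := by
      rw [← h2]
      have : TensorProduct.map S (S ∘ₗ Gq)
          = TensorProduct.map S S ∘ₗ TensorProduct.map LinearMap.id Gq := by
        rw [← TensorProduct.map_comp, LinearMap.comp_id]
      rw [this, LinearMap.comp_apply]
    -- Step 3: cross identity
    have h4 := cross φ S (Δ p) (Δ q)
    -- Step 4: S ∘ Gmap φ (Δ p) = Mp where Mp c = sliceR φ ((1⊗p)Δc)
    set Mp : A →ₗ[ℂ] A := sliceR φ ∘ₗ LinearMap.mulLeft ℂ ((1:A) ⊗ₜ[ℂ] p) ∘ₗ Δ.toLinearMap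
      with hMp
    have h5 : S ∘ₗ Gmap φ (Δ p) = Mp := by
      ext c
      simp only [LinearMap.comp_apply, Gmap_apply, hMp, LinearMap.mulLeft_apply]
      exact hS p c
    -- Step 5: RHS computation
    have hfg2 : sliceR (φ ∘ₗ LinearMap.mulLeft ℂ p) ∘ₗ Δ.toLinearMap = Mp := by
      apply LinearMap.ext; intro c
      simp only [LinearMap.comp_apply, hMp, LinearMap.mulLeft_apply]
      rw [← sliceR_mul_left]
    have h6 : Δ.toLinearMap (S (sliceR φ (Δ p * ((1:A) ⊗ₜ[ℂ] q))))
        = TensorProduct.map LinearMap.id Mp (Δ q) := by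
      rw [hS p q, sliceR_mul_left, delta_sliceR_delta Δ hΔ, hfg2]
    rw [h1, h3, h4, h5, h6]
  intro a
  have := LinearMap.congr_fun key a
  simpa using this
end
end

section
/- Let A be an associative unital algebra over ℂ with a full comultiplication Δ, admitting a faithful left integral φ and a faithful right integral. Let ε : A → ℂ be the linear map determined by ε((id ⊗ φ)(Δ(a)(1 ⊗ b))) = φ(ab) and let S : A → A be the linear map determined by S((id ⊗ φ)(Δ(a)(1 ⊗ b))) = (id ⊗ φ)((1 ⊗ a)Δ(b)). Then m(id ⊗ S)(Δ(a)) = ε(a)·1 and m(S ⊗ id)(Δ(a)) = ε(a)·1 for all a ∈ A, where m : A ⊗ A → A is the multiplication map. Moreover, if R : A → A is any linear map satisfying m(id ⊗ R)(Δ(a)) = ε(a)·1 for all a, or satisfying m(R ⊗ id)(Δ(a)) = ε(a)·1 for all a, then R = S. -/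
open TensorProduct

set_option synthInstance.maxHeartbeats 1000000
set_option maxHeartbeats 1600000

noncomputable section

variable {A : Type*} [Ring A] [Algebra ℂ A]

namespace VDAux

@[simp] lemma sliceR_tmul (ω : A →ₗ[ℂ] ℂ) (x y : A) :
    sliceR ω (x ⊗ₜ[ℂ] y) = ω y • x := by
  simp [sliceR]

@[simp] lemma sliceL_tmul (ω : A →ₗ[ℂ] ℂ) (x y : A) :
    sliceL ω (x ⊗ₜ[ℂ] y) = ω x • y := by
  simp [sliceL]

/-- contraction of the second factor of `M ⊗ A` against a functional. -/
def cR {M : Type*} [AddCommGroup M] [Module ℂ M] (ω : A →ₗ[ℂ] ℂ) :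
    M ⊗[ℂ] A →ₗ[ℂ] M :=
  (TensorProduct.rid ℂ M).toLinearMap ∘ₗ TensorProduct.map LinearMap.id ω

@[simp] lemma cR_tmul {M : Type*} [AddCommGroup M] [Module ℂ M] (ω : A →ₗ[ℂ] ℂ)
    (m : M) (a : A) : cR ω (m ⊗ₜ[ℂ] a) = ω a • m := by
  simp [cR]

/-- contraction of the first factor of `A ⊗ M` against a functional. -/
def cL {M : Type*} [AddCommGroup M] [Module ℂ M] (ω : A →ₗ[ℂ] ℂ) :
    A ⊗[ℂ] M →ₗ[ℂ] M :=
  (TensorProduct.lid ℂ M).toLinearMap ∘ₗ TensorProduct.map ω LinearMap.id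

@[simp] lemma cL_tmul {M : Type*} [AddCommGroup M] [Module ℂ M] (ω : A →ₗ[ℂ] ℂ)
    (a : A) (m : M) : cL ω (a ⊗ₜ[ℂ] m) = ω a • m := by
  simp [cL]

/-- Given a "separating" bilinear form `B`, and a finite linearly independent family `v`,
there is `b` dual to the `j`-th member on `s`. -/
lemma exists_dual_elem (B : A →ₗ[ℂ] A →ₗ[ℂ] ℂ)
    (sep : ∀ y : A, (∀ b : A, B y b = 0) → y = 0)
    {ι : Type*} (v : ι → A) (hv : LinearIndependent ℂ v) (s : Finset ι) (j : ι) (hj : j ∈ s) :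
    ∃ b : A, B (v j) b = 1 ∧ ∀ i ∈ s, i ≠ j → B (v i) b = 0 := by
  classical
  set Q : A →ₗ[ℂ] (s → ℂ) := LinearMap.pi (fun i : s => B (v i)) with hQ
  have hrange : LinearMap.range Q = ⊤ := by
    by_contra h
    obtain ⟨ξ, hξ0, hξ⟩ := Submodule.exists_dual_map_eq_bot_of_lt_top
      (lt_top_iff_ne_top.mpr h) inferInstance
    have hzero : ∀ b : A, ξ (Q b) = 0 := by
      intro b
      have hmem : ξ (Q b) ∈ (LinearMap.range Q).map ξ :=
        Submodule.mem_map_of_mem (LinearMap.mem_range_self Q b)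
      rw [hξ] at hmem
      simpa using hmem
    have hxi : ∀ w : s → ℂ, ξ w = ∑ i : s, w i * ξ (fun k => if i = k then 1 else 0) := by
      intro w
      conv_lhs => rw [pi_eq_sum_univ w]
      rw [map_sum]
      refine Finset.sum_congr rfl fun i _ => ?_
      rw [map_smul]
      simp [smul_eq_mul]
    set y : A := ∑ i : s, ξ (fun k => if i = k then 1 else 0) • v i with hy
    have hyB : ∀ b : A, B y b = 0 := by
      intro b
      have h1 := hzero b
      rw [hxi (Q b)] at h1
      have : B y b = ∑ i : s, (B (v i) b) * ξ (fun k => if i = k then 1 else 0) := by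
        rw [hy]
        rw [map_sum]
        rw [LinearMap.sum_apply]
        refine Finset.sum_congr rfl fun i _ => ?_
        rw [map_smul]
        simp [smul_eq_mul, mul_comm]
      rw [this]
      simpa [hQ] using h1
    have hy0 : y = 0 := sep y hyB
    have hlin : LinearIndependent ℂ (fun i : s => v i) := hv.comp _ Subtype.val_injective
    have hcoef : ∀ i : s, ξ (fun k => if i = k then 1 else 0) = 0 := by
      have := (Fintype.linearIndependent_iff.mp hlin)
        (fun i => ξ (fun k => if i = k then 1 else 0)) (by rw [← hy]; exact hy0)
      exact this
    apply hξ0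
    apply LinearMap.ext
    intro w
    rw [hxi w]
    simp [hcoef]
  obtain ⟨b, hb⟩ := (LinearMap.range_eq_top.mp hrange) (fun i : s => if (i : ι) = j then 1 else 0)
  refine ⟨b, ?_, fun i hi hij => ?_⟩
  · have := congrFun hb ⟨j, hj⟩
    simpa [hQ] using this
  · have := congrFun hb ⟨i, hi⟩
    simpa [hQ, hij] using this

/-- Separation lemma: if all contractions of `Z ∈ M ⊗ A` against the separating family
`B (·) b` vanish, then `Z = 0`. -/
lemma sep_right {M : Type*} [AddCommGroup M] [Module ℂ M]
    (B : A →ₗ[ℂ] A →ₗ[ℂ] ℂ) (sep : ∀ y : A, (∀ b : A, B y b = 0) → y = 0)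
    (Z : M ⊗[ℂ] A) (hZ : ∀ b : A, cR (B.flip b) Z = 0) : Z = 0 := by
  classical
  set β := Module.Free.chooseBasis ℂ A with hβ
  set e := TensorProduct.equivFinsuppOfBasisRight (M := M) β with he
  have key : ∀ (ω : A →ₗ[ℂ] ℂ) (W : M ⊗[ℂ] A),
      cR ω W = (e W).sum fun i m => ω (β i) • m := by
    intro ω W
    induction W using TensorProduct.induction_on with
    | zero => simp
    | tmul m a =>
      rw [TensorProduct.equivFinsuppOfBasisRight_apply_tmul]
      rw [Finsupp.sum_mapRange_index (by simp)]
      have : (β.repr a).sum (fun i c => ω (β i) • c • m) = ((β.repr a).sum fun i c => c * ω (β i)) • m := by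
        unfold Finsupp.sum
        rw [Finset.sum_smul]
        refine Finset.sum_congr rfl fun i _ => ?_
        rw [mul_smul]
        rw [smul_comm]
      rw [cR_tmul, this]
      congr 1
      have ha : a = (β.repr a).sum fun i c => c • β i := by
        conv_lhs => rw [← β.linearCombination_repr a]
        rw [Finsupp.linearCombination_apply]
      conv_lhs => rw [ha]
      rw [map_finsuppSum]
      simp [smul_eq_mul, mul_comm]
    | add x y hx hy =>
      rw [map_add, map_add, hx, hy, ← Finsupp.sum_add_index]
      · intro i _; simp
      · intro i _ m₁ m₂; rw [smul_add]
  suffices hfz : e Z = 0 by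
    exact e.map_eq_zero_iff.mp hfz
  ext j
  by_cases hjs : j ∈ (e Z).support
  · obtain ⟨b, hb1, hb0⟩ := exists_dual_elem B sep β β.linearIndependent (e Z).support j hjs
    have h0 := hZ b
    rw [key (B.flip b) Z] at h0
    unfold Finsupp.sum at h0
    rw [Finset.sum_eq_single j] at h0
    · simp only [LinearMap.flip_apply, hb1, one_smul] at h0
      simpa using h0
    · intro i hi hij
      simp only [LinearMap.flip_apply, hb0 i hi hij, zero_smul]
    · intro h; exact absurd hjs h
  · simpa using hjs

lemma sep_left {M : Type*} [AddCommGroup M] [Module ℂ M]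
    (B : A →ₗ[ℂ] A →ₗ[ℂ] ℂ) (sep : ∀ y : A, (∀ b : A, B y b = 0) → y = 0)
    (Z : A ⊗[ℂ] M) (hZ : ∀ b : A, cL (B.flip b) Z = 0) : Z = 0 := by
  have hcomm : ∀ (ω : A →ₗ[ℂ] ℂ) (W : A ⊗[ℂ] M),
      cR ω ((TensorProduct.comm ℂ A M) W) = cL ω W := by
    intro ω W
    induction W using TensorProduct.induction_on with
    | zero => simp
    | tmul x m => simp
    | add x y hx hy => simp [map_add, hx, hy]
  have h := sep_right B sep ((TensorProduct.comm ℂ A M) Z) (fun b => by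
    rw [hcomm]; exact hZ b)
  have := congrArg (TensorProduct.comm ℂ A M).symm h
  simpa using this

lemma map_sliceR {M : Type*} [AddCommGroup M] [Module ℂ M] (π : A →ₗ[ℂ] M)
    (ω : A →ₗ[ℂ] ℂ) (X : A ⊗[ℂ] A) :
    π (sliceR ω X) = cR ω (TensorProduct.map π LinearMap.id X) := by
  induction X using TensorProduct.induction_on with
  | zero => simp
  | tmul x y => simp
  | add x y hx hy => simp [map_add, hx, hy]

lemma map_sliceL {M : Type*} [AddCommGroup M] [Module ℂ M] (π : A →ₗ[ℂ] M)
    (ω : A →ₗ[ℂ] ℂ) (X : A ⊗[ℂ] A) :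
    π (sliceL ω X) = cL ω (TensorProduct.map LinearMap.id π X) := by
  induction X using TensorProduct.induction_on with
  | zero => simp
  | tmul x y => simp
  | add x y hx hy => simp [map_add, hx, hy]

lemma EeAlt (φ : A →ₗ[ℂ] ℂ) (b : A) (X : A ⊗[ℂ] A) :
    sliceR (((LinearMap.mul ℂ A).compr₂ φ).flip b) X = sliceR φ (X * ((1:A) ⊗ₜ[ℂ] b)) := by
  induction X using TensorProduct.induction_on with
  | zero => simp
  | tmul x y => simp [Algebra.TensorProduct.tmul_mul_tmul]
  | add x y hx hy => simp [add_mul, map_add, hx, hy]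

lemma EpAlt (ψ : A →ₗ[ℂ] ℂ) (c : A) (X : A ⊗[ℂ] A) :
    sliceL ((((LinearMap.mul ℂ A).flip).compr₂ ψ).flip c) X
      = sliceL ψ ((c ⊗ₜ[ℂ] (1:A)) * X) := by
  induction X using TensorProduct.induction_on with
  | zero => simp
  | tmul x y => simp [Algebra.TensorProduct.tmul_mul_tmul]
  | add x y hx hy => simp [mul_add, map_add, hx, hy]

lemma span_E_top (Δ : A →ₐ[ℂ] A ⊗[ℂ] A) (φ : A →ₗ[ℂ] ℂ)
    (hleft : leftLeg Δ = ⊤)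
    (hsep : ∀ y : A, (∀ b : A, φ (y * b) = 0) → y = 0) :
    Submodule.span ℂ {y : A | ∃ a b : A, y = sliceR φ (Δ a * ((1:A) ⊗ₜ[ℂ] b))} = ⊤ := by
  set V := Submodule.span ℂ {y : A | ∃ a b : A, y = sliceR φ (Δ a * ((1:A) ⊗ₜ[ℂ] b))} with hV
  rw [eq_top_iff]
  intro x _
  have hx : x ∈ leftLeg Δ := hleft ▸ Submodule.mem_top
  refine Submodule.span_induction ?_ (Submodule.zero_mem V)
    (fun y z _ _ hy hz => Submodule.add_mem V hy hz)
    (fun c y _ hy => Submodule.smul_mem V c hy) hx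
  rintro y ⟨a, ω, rfl⟩
  set B : A →ₗ[ℂ] A →ₗ[ℂ] ℂ := (LinearMap.mul ℂ A).compr₂ φ with hB
  have hsepB : ∀ y : A, (∀ b : A, B y b = 0) → y = 0 := by
    intro y hy
    exact hsep y (fun b => by simpa [hB] using hy b)
  have hZ : ∀ b : A, cR (B.flip b) (TensorProduct.map V.mkQ LinearMap.id (Δ a)) = 0 := by
    intro b
    rw [← map_sliceR, EeAlt]
    exact (Submodule.Quotient.mk_eq_zero V).mpr (Submodule.subset_span ⟨a, b, rfl⟩)
  have hZ0 := sep_right B hsepB _ hZ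
  have : V.mkQ (sliceR ω (Δ a)) = 0 := by rw [map_sliceR V.mkQ ω, hZ0, map_zero]
  exact (Submodule.Quotient.mk_eq_zero V).mp this

lemma span_Ep_top (Δ : A →ₐ[ℂ] A ⊗[ℂ] A) (ψ : A →ₗ[ℂ] ℂ)
    (hright : rightLeg Δ = ⊤)
    (hsep : ∀ y : A, (∀ b : A, ψ (b * y) = 0) → y = 0) :
    Submodule.span ℂ {y : A | ∃ a b : A, y = sliceL ψ ((a ⊗ₜ[ℂ] (1:A)) * Δ b)} = ⊤ := by
  set V := Submodule.span ℂ {y : A | ∃ a b : A, y = sliceL ψ ((a ⊗ₜ[ℂ] (1:A)) * Δ b)} with hV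
  rw [eq_top_iff]
  intro x _
  have hx : x ∈ rightLeg Δ := hright ▸ Submodule.mem_top
  refine Submodule.span_induction ?_ (Submodule.zero_mem V)
    (fun y z _ _ hy hz => Submodule.add_mem V hy hz)
    (fun c y _ hy => Submodule.smul_mem V c hy) hx
  rintro y ⟨a, ω, rfl⟩
  set B : A →ₗ[ℂ] A →ₗ[ℂ] ℂ := ((LinearMap.mul ℂ A).flip).compr₂ ψ with hB
  have hsepB : ∀ y : A, (∀ b : A, B y b = 0) → y = 0 := by
    intro y hy
    exact hsep y (fun b => by simpa [hB] using hy b)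
  have hZ : ∀ c : A, cL (B.flip c) (TensorProduct.map LinearMap.id V.mkQ (Δ a)) = 0 := by
    intro c
    rw [← map_sliceL, EpAlt]
    exact (Submodule.Quotient.mk_eq_zero V).mpr (Submodule.subset_span ⟨c, a, rfl⟩)
  have hZ0 := sep_left B hsepB _ hZ
  have : V.mkQ (sliceL ω (Δ a)) = 0 := by rw [map_sliceL V.mkQ ω, hZ0, map_zero]
  exact (Submodule.Quotient.mk_eq_zero V).mp this


section Main

variable (Δ : A →ₐ[ℂ] A ⊗[ℂ] A) (φ ψ : A →ₗ[ℂ] ℂ)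

/-- `b ↦ Δ a * (1 ⊗ b)` sliced: the map `a ↦ (id ⊗ φ)(Δ a (1 ⊗ b))`. -/
def EeL (b : A) : A →ₗ[ℂ] A :=
  sliceR φ ∘ₗ LinearMap.mulRight ℂ ((1:A) ⊗ₜ[ℂ] b) ∘ₗ Δ.toLinearMap

@[simp] lemma EeL_apply (b a : A) :
    EeL Δ φ b a = sliceR φ (Δ a * ((1:A) ⊗ₜ[ℂ] b)) := rfl

def FfL (b : A) : A →ₗ[ℂ] A :=
  sliceR φ ∘ₗ LinearMap.mulRight ℂ (Δ b) ∘ₗ TensorProduct.mk ℂ A A 1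

@[simp] lemma FfL_apply (b x : A) :
    FfL Δ φ b x = sliceR φ (((1:A) ⊗ₜ[ℂ] x) * Δ b) := rfl

def EpL (a : A) : A →ₗ[ℂ] A :=
  sliceL ψ ∘ₗ LinearMap.mulLeft ℂ (a ⊗ₜ[ℂ] (1:A)) ∘ₗ Δ.toLinearMap

@[simp] lemma EpL_apply (a b : A) :
    EpL Δ ψ a b = sliceL ψ ((a ⊗ₜ[ℂ] (1:A)) * Δ b) := rfl

def FpL (a : A) : A →ₗ[ℂ] A :=
  sliceL ψ ∘ₗ LinearMap.mulLeft ℂ (Δ a) ∘ₗ (TensorProduct.mk ℂ A A).flip 1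

@[simp] lemma FpL_apply (a b : A) :
    FpL Δ ψ a b = sliceL ψ (Δ a * (b ⊗ₜ[ℂ] (1:A))) := rfl

/-- Sweedler: `Δ((id ⊗ φ)(Δa (1⊗b))) = Σ a₁ ⊗ (id⊗φ)(Δa₂ (1⊗b))`. -/
lemma deltaEe (hΔ : IsCoassoc Δ) (a b : A) :
    Δ.toLinearMap (sliceR φ (Δ a * ((1:A) ⊗ₜ[ℂ] b)))
      = TensorProduct.map LinearMap.id (EeL Δ φ b) (Δ a) := by
  have G1 : ∀ Y : A ⊗[ℂ] A, Δ.toLinearMap (sliceR φ (Y * ((1:A) ⊗ₜ[ℂ] b)))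
      = cR (M := A ⊗[ℂ] A) (φ ∘ₗ LinearMap.mulRight ℂ b)
          (TensorProduct.map Δ.toLinearMap LinearMap.id Y) := by
    intro Y
    induction Y using TensorProduct.induction_on with
    | zero => simp
    | tmul x y => simp [Algebra.TensorProduct.tmul_mul_tmul]
    | add x y hx hy => simp [add_mul, map_add, hx, hy]
  have hco : TensorProduct.map Δ.toLinearMap LinearMap.id (Δ a)
      = (TensorProduct.assoc ℂ A A A).symm
          (TensorProduct.map LinearMap.id Δ.toLinearMap (Δ a)) := by
    rw [← hΔ a, LinearEquiv.symm_apply_apply]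
  have G2a : ∀ (x : A) (Z : A ⊗[ℂ] A),
      cR (M := A ⊗[ℂ] A) (φ ∘ₗ LinearMap.mulRight ℂ b)
          ((TensorProduct.assoc ℂ A A A).symm (x ⊗ₜ[ℂ] Z))
        = x ⊗ₜ[ℂ] sliceR φ (Z * ((1:A) ⊗ₜ[ℂ] b)) := by
    intro x Z
    induction Z using TensorProduct.induction_on with
    | zero => simp
    | tmul u v => simp [Algebra.TensorProduct.tmul_mul_tmul, TensorProduct.tmul_smul]
    | add u v hu hv =>
      simp only [TensorProduct.tmul_add, map_add, add_mul, hu, hv]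
  have G2 : ∀ Y : A ⊗[ℂ] A,
      cR (M := A ⊗[ℂ] A) (φ ∘ₗ LinearMap.mulRight ℂ b)
          ((TensorProduct.assoc ℂ A A A).symm (TensorProduct.map LinearMap.id Δ.toLinearMap Y))
        = TensorProduct.map LinearMap.id (EeL Δ φ b) Y := by
    intro Y
    induction Y using TensorProduct.induction_on with
    | zero => simp
    | tmul x y => simp [G2a]
    | add x y hx hy => simp [map_add, hx, hy]
  rw [G1 (Δ a), hco, G2 (Δ a)]

/-- Sweedler: `Δ((ψ ⊗ id)((a⊗1) Δb)) = Σ (ψ⊗id)((a⊗1)Δb₁) ⊗ b₂`. -/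
lemma deltaEp (hΔ : IsCoassoc Δ) (a b : A) :
    Δ.toLinearMap (sliceL ψ ((a ⊗ₜ[ℂ] (1:A)) * Δ b))
      = TensorProduct.map (EpL Δ ψ a) LinearMap.id (Δ b) := by
  have G1 : ∀ Y : A ⊗[ℂ] A, Δ.toLinearMap (sliceL ψ ((a ⊗ₜ[ℂ] (1:A)) * Y))
      = cL (M := A ⊗[ℂ] A) (ψ ∘ₗ LinearMap.mulLeft ℂ a)
          (TensorProduct.map LinearMap.id Δ.toLinearMap Y) := by
    intro Y
    induction Y using TensorProduct.induction_on with
    | zero => simp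
    | tmul x y => simp [Algebra.TensorProduct.tmul_mul_tmul]
    | add x y hx hy => simp [mul_add, map_add, hx, hy]
  have G2a : ∀ (y : A) (Z : A ⊗[ℂ] A),
      cL (M := A ⊗[ℂ] A) (ψ ∘ₗ LinearMap.mulLeft ℂ a)
          (TensorProduct.assoc ℂ A A A (Z ⊗ₜ[ℂ] y))
        = sliceL ψ ((a ⊗ₜ[ℂ] (1:A)) * Z) ⊗ₜ[ℂ] y := by
    intro y Z
    induction Z using TensorProduct.induction_on with
    | zero => simp
    | tmul u v =>
      simp [TensorProduct.assoc_tmul, Algebra.TensorProduct.tmul_mul_tmul,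
        TensorProduct.smul_tmul']
    | add u v hu hv =>
      simp only [TensorProduct.add_tmul, map_add, mul_add, hu, hv]
  have G2 : ∀ Y : A ⊗[ℂ] A,
      cL (M := A ⊗[ℂ] A) (ψ ∘ₗ LinearMap.mulLeft ℂ a)
          (TensorProduct.assoc ℂ A A A (TensorProduct.map Δ.toLinearMap LinearMap.id Y))
        = TensorProduct.map (EpL Δ ψ a) LinearMap.id Y := by
    intro Y
    induction Y using TensorProduct.induction_on with
    | zero => simp
    | tmul x y => simp [G2a]
    | add x y hx hy => simp [map_add, hx, hy]
  rw [G1 (Δ b), ← hΔ b, G2 (Δ b)]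


lemma mulSliceR (x : A) (Z : A ⊗[ℂ] A) :
    x * sliceR φ Z = sliceR φ ((x ⊗ₜ[ℂ] (1:A)) * Z) := by
  induction Z using TensorProduct.induction_on with
  | zero => simp
  | tmul u v => simp [Algebra.TensorProduct.tmul_mul_tmul, mul_smul_comm]
  | add u v hu hv => simp only [map_add, mul_add, hu, hv]

lemma sliceR_mapid (ω : A →ₗ[ℂ] ℂ) (f : A →ₗ[ℂ] A) (Y : A ⊗[ℂ] A) :
    sliceR ω (TensorProduct.map LinearMap.id f Y) = sliceR (ω ∘ₗ f) Y := by
  induction Y using TensorProduct.induction_on with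
  | zero => simp
  | tmul u v => simp
  | add u v hu hv => simp only [map_add, hu, hv]

lemma sliceL_mapid (ω : A →ₗ[ℂ] ℂ) (f : A →ₗ[ℂ] A) (Y : A ⊗[ℂ] A) :
    sliceL ω (TensorProduct.map f LinearMap.id Y) = sliceL (ω ∘ₗ f) Y := by
  induction Y using TensorProduct.induction_on with
  | zero => simp
  | tmul u v => simp
  | add u v hu hv => simp only [map_add, hu, hv]

lemma mulFf (b : A) (Y : A ⊗[ℂ] A) :
    LinearMap.mul' ℂ A (TensorProduct.map LinearMap.id (FfL Δ φ b) Y)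
      = sliceR φ (Y * Δ b) := by
  induction Y using TensorProduct.induction_on with
  | zero => simp
  | tmul x y =>
    rw [TensorProduct.map_tmul, LinearMap.mul'_apply, LinearMap.id_apply, FfL_apply,
      mulSliceR, ← mul_assoc, Algebra.TensorProduct.tmul_mul_tmul, mul_one, one_mul]
  | add x y hx hy => simp only [map_add, add_mul, hx, hy]

variable (ε : A →ₗ[ℂ] ℂ) (S : A →ₗ[ℂ] A)

lemma goalA_E (hΔ : IsCoassoc Δ) (hφ2 : ∀ a : A, sliceR φ (Δ a) = φ a • (1:A))
    (hS : ∀ a b : A, S (sliceR φ (Δ a * ((1 : A) ⊗ₜ[ℂ] b))) =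
      sliceR φ (((1 : A) ⊗ₜ[ℂ] a) * Δ b)) (a b : A) :
    LinearMap.mul' ℂ A (TensorProduct.map LinearMap.id S
        (Δ (sliceR φ (Δ a * ((1:A) ⊗ₜ[ℂ] b))))) = φ (a * b) • (1:A) := by
  have h1 := deltaEe Δ φ hΔ a b
  simp only [AlgHom.toLinearMap_apply] at h1
  rw [h1]
  have h2 : TensorProduct.map LinearMap.id S (TensorProduct.map LinearMap.id (EeL Δ φ b) (Δ a))
      = TensorProduct.map LinearMap.id (FfL Δ φ b) (Δ a) := by
    have hcomp : TensorProduct.map (LinearMap.id : A →ₗ[ℂ] A) S ∘ₗ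
          TensorProduct.map (LinearMap.id : A →ₗ[ℂ] A) (EeL Δ φ b)
        = TensorProduct.map (LinearMap.id : A →ₗ[ℂ] A) (S ∘ₗ EeL Δ φ b) := by
      apply TensorProduct.ext'
      intro x y
      simp
    have hSE : S ∘ₗ EeL Δ φ b = FfL Δ φ b := by
      apply LinearMap.ext
      intro x
      simpa using hS x b
    calc TensorProduct.map LinearMap.id S (TensorProduct.map LinearMap.id (EeL Δ φ b) (Δ a))
        = (TensorProduct.map LinearMap.id S ∘ₗ TensorProduct.map LinearMap.id (EeL Δ φ b)) (Δ a) := rfl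
      _ = TensorProduct.map LinearMap.id (FfL Δ φ b) (Δ a) := by rw [hcomp, hSE]
  rw [h2, mulFf, ← map_mul, hφ2]

lemma goalA (hΔ : IsCoassoc Δ) (hφ2 : ∀ a : A, sliceR φ (Δ a) = φ a • (1:A))
    (hε : ∀ a b : A, ε (sliceR φ (Δ a * ((1 : A) ⊗ₜ[ℂ] b))) = φ (a * b))
    (hS : ∀ a b : A, S (sliceR φ (Δ a * ((1 : A) ⊗ₜ[ℂ] b))) =
      sliceR φ (((1 : A) ⊗ₜ[ℂ] a) * Δ b))
    (hspan : Submodule.span ℂ {y : A | ∃ a b : A, y = sliceR φ (Δ a * ((1:A) ⊗ₜ[ℂ] b))} = ⊤) :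
    ∀ a : A, LinearMap.mul' ℂ A (TensorProduct.map LinearMap.id S (Δ a)) = ε a • (1:A) := by
  set κ : A →ₗ[ℂ] A :=
    (LinearMap.mul' ℂ A ∘ₗ TensorProduct.map LinearMap.id S ∘ₗ Δ.toLinearMap)
      - (LinearMap.toSpanSingleton ℂ A 1 ∘ₗ ε) with hκ
  have hgen : ∀ x ∈ Submodule.span ℂ
      {y : A | ∃ a b : A, y = sliceR φ (Δ a * ((1:A) ⊗ₜ[ℂ] b))}, κ x = 0 := by
    intro x hx
    refine Submodule.span_induction ?_ (by simp) (fun y z _ _ hy hz => by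
      rw [map_add, hy, hz, add_zero]) (fun c y _ hy => by rw [map_smul, hy, smul_zero]) hx
    rintro y ⟨a, b, rfl⟩
    simp only [hκ, LinearMap.sub_apply, LinearMap.comp_apply, AlgHom.toLinearMap_apply,
      LinearMap.toSpanSingleton_apply]
    rw [goalA_E Δ φ S hΔ hφ2 hS a b, hε a b, sub_self]
  intro a
  have := hgen a (hspan ▸ Submodule.mem_top)
  simp only [hκ, LinearMap.sub_apply, LinearMap.comp_apply, AlgHom.toLinearMap_apply,
    LinearMap.toSpanSingleton_apply] at this
  exact sub_eq_zero.mp this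

lemma counitL (hΔ : IsCoassoc Δ)
    (hε : ∀ a b : A, ε (sliceR φ (Δ a * ((1 : A) ⊗ₜ[ℂ] b))) = φ (a * b))
    (hspan : Submodule.span ℂ {y : A | ∃ a b : A, y = sliceR φ (Δ a * ((1:A) ⊗ₜ[ℂ] b))} = ⊤) :
    ∀ a : A, sliceR ε (Δ a) = a := by
  set κ : A →ₗ[ℂ] A := (sliceR ε ∘ₗ Δ.toLinearMap) - LinearMap.id with hκ
  have hgen : ∀ x ∈ Submodule.span ℂ
      {y : A | ∃ a b : A, y = sliceR φ (Δ a * ((1:A) ⊗ₜ[ℂ] b))}, κ x = 0 := by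
    intro x hx
    refine Submodule.span_induction ?_ (by simp) (fun y z _ _ hy hz => by
      rw [map_add, hy, hz, add_zero]) (fun c y _ hy => by rw [map_smul, hy, smul_zero]) hx
    rintro y ⟨a, b, rfl⟩
    simp only [hκ, LinearMap.sub_apply, LinearMap.comp_apply, AlgHom.toLinearMap_apply,
      LinearMap.id_apply]
    have h1 := deltaEe Δ φ hΔ a b
    simp only [AlgHom.toLinearMap_apply] at h1
    rw [h1, sliceR_mapid]
    have h2 : ε ∘ₗ EeL Δ φ b = ((LinearMap.mul ℂ A).compr₂ φ).flip b := by
      apply LinearMap.ext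
      intro x
      simpa using hε x b
    rw [h2, EeAlt, sub_self]
  intro a
  have := hgen a (hspan ▸ Submodule.mem_top)
  simp only [hκ, LinearMap.sub_apply, LinearMap.comp_apply, AlgHom.toLinearMap_apply,
    LinearMap.id_apply] at this
  exact sub_eq_zero.mp this

lemma epsEp (hcounitL : ∀ a : A, sliceR ε (Δ a) = a) (a b : A) :
    ε (sliceL ψ ((a ⊗ₜ[ℂ] (1:A)) * Δ b)) = ψ (a * b) := by
  have lem : ∀ Y : A ⊗[ℂ] A,
      ε (sliceL ψ ((a ⊗ₜ[ℂ] (1:A)) * Y)) = ψ (a * sliceR ε Y) := by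
    intro Y
    induction Y using TensorProduct.induction_on with
    | zero => simp
    | tmul u v =>
      simp [Algebra.TensorProduct.tmul_mul_tmul, mul_smul_comm, smul_eq_mul, mul_comm]
    | add u v hu hv => simp only [map_add, mul_add, hu, hv]
  rw [lem (Δ b), hcounitL b]

lemma counitR (hΔ : IsCoassoc Δ) (hcounitL : ∀ a : A, sliceR ε (Δ a) = a)
    (hspan' : Submodule.span ℂ
      {y : A | ∃ a b : A, y = sliceL ψ ((a ⊗ₜ[ℂ] (1:A)) * Δ b)} = ⊤) :
    ∀ a : A, sliceL ε (Δ a) = a := by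
  set κ : A →ₗ[ℂ] A := (sliceL ε ∘ₗ Δ.toLinearMap) - LinearMap.id with hκ
  have hgen : ∀ x ∈ Submodule.span ℂ
      {y : A | ∃ a b : A, y = sliceL ψ ((a ⊗ₜ[ℂ] (1:A)) * Δ b)}, κ x = 0 := by
    intro x hx
    refine Submodule.span_induction ?_ (by simp) (fun y z _ _ hy hz => by
      rw [map_add, hy, hz, add_zero]) (fun c y _ hy => by rw [map_smul, hy, smul_zero]) hx
    rintro y ⟨a, b, rfl⟩
    simp only [hκ, LinearMap.sub_apply, LinearMap.comp_apply, AlgHom.toLinearMap_apply,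
      LinearMap.id_apply]
    have h1 := deltaEp Δ ψ hΔ a b
    simp only [AlgHom.toLinearMap_apply] at h1
    rw [h1, sliceL_mapid]
    have h2 : ε ∘ₗ EpL Δ ψ a = ((((LinearMap.mul ℂ A).flip).compr₂ ψ)).flip a := by
      apply LinearMap.ext
      intro x
      simpa using epsEp Δ ψ ε hcounitL a x
    rw [h2, EpAlt, sub_self]
  intro a
  have := hgen a (hspan' ▸ Submodule.mem_top)
  simp only [hκ, LinearMap.sub_apply, LinearMap.comp_apply, AlgHom.toLinearMap_apply,
    LinearMap.id_apply] at this
  exact sub_eq_zero.mp this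

lemma S_sliceL (θ : A →ₗ[ℂ] ℂ) (Y : A ⊗[ℂ] A) :
    S (sliceL θ Y) = sliceL θ (TensorProduct.map LinearMap.id S Y) := by
  induction Y using TensorProduct.induction_on with
  | zero => simp
  | tmul u v => simp
  | add u v hu hv => simp only [map_add, hu, hv]

lemma sliceL_factor (P : A ⊗[ℂ] A) (u x : A) :
    sliceL ψ (P * (u ⊗ₜ[ℂ] x)) = sliceL ψ (P * (u ⊗ₜ[ℂ] (1:A))) * x := by
  induction P using TensorProduct.induction_on with
  | zero => simp
  | tmul p q =>
    simp [Algebra.TensorProduct.tmul_mul_tmul, smul_mul_assoc, mul_assoc]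
  | add p q hp hq => simp only [add_mul, map_add, hp, hq]

/-- Key lemma: `S((ψ ⊗ id)((a⊗1)Δb)) = (ψ ⊗ id)(Δa (b⊗1))`. -/
lemma KL (hΔ : IsCoassoc Δ) (hψ2 : ∀ a : A, sliceL ψ (Δ a) = ψ a • (1:A))
    (hgoalA : ∀ a : A, LinearMap.mul' ℂ A (TensorProduct.map LinearMap.id S (Δ a)) = ε a • (1:A))
    (hcounitL : ∀ a : A, sliceR ε (Δ a) = a) (a b : A) :
    S (sliceL ψ ((a ⊗ₜ[ℂ] (1:A)) * Δ b)) = sliceL ψ (Δ a * (b ⊗ₜ[ℂ] (1:A))) := by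
  set g : A ⊗[ℂ] A →ₗ[ℂ] A := sliceL ψ ∘ₗ LinearMap.mulLeft ℂ (Δ a) with hg
  set g' : A →ₗ[ℂ] A := g ∘ₗ Δ.toLinearMap with hg'
  -- step 1: S (E'(a,b)) = Σ ψ(a b₁) S(b₂)
  have step1 : S (sliceL ψ ((a ⊗ₜ[ℂ] (1:A)) * Δ b))
      = sliceL ((((LinearMap.mul ℂ A).flip).compr₂ ψ).flip a)
          (TensorProduct.map LinearMap.id S (Δ b)) := by
    rw [← EpAlt, ← S_sliceL]
  -- step 2: rewrite scalar ψ(a u) as (ψ ⊗ id)(Δ(a) Δ(u))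
  have step2 : ∀ Y : A ⊗[ℂ] A,
      sliceL ((((LinearMap.mul ℂ A).flip).compr₂ ψ).flip a)
          (TensorProduct.map LinearMap.id S Y)
        = LinearMap.mul' ℂ A (TensorProduct.map g' S Y) := by
    intro Y
    induction Y using TensorProduct.induction_on with
    | zero => simp
    | tmul u v =>
      simp only [TensorProduct.map_tmul, LinearMap.id_apply, sliceL_tmul,
        LinearMap.mul'_apply, hg', hg, LinearMap.comp_apply, AlgHom.toLinearMap_apply,
        LinearMap.mulLeft_apply]
      rw [← map_mul, hψ2 (a * u), smul_mul_assoc, one_mul]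
      simp
    | add u v hu hv => simp only [map_add, hu, hv]
  -- step 3: factor through (Δ ⊗ id)
  have step3 : ∀ Y : A ⊗[ℂ] A,
      TensorProduct.map g' S Y
        = TensorProduct.map g S (TensorProduct.map Δ.toLinearMap LinearMap.id Y) := by
    intro Y
    induction Y using TensorProduct.induction_on with
    | zero => simp
    | tmul u v => simp [hg']
    | add u v hu hv => simp only [map_add, hu, hv]
  -- step 4: coassociativity
  have hco : TensorProduct.map Δ.toLinearMap LinearMap.id (Δ b)
      = (TensorProduct.assoc ℂ A A A).symm
          (TensorProduct.map LinearMap.id Δ.toLinearMap (Δ b)) := by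
    rw [← hΔ b, LinearEquiv.symm_apply_apply]
  -- step 5: pointwise expansion
  have step5 : ∀ (u : A) (Z : A ⊗[ℂ] A),
      LinearMap.mul' ℂ A (TensorProduct.map g S
          ((TensorProduct.assoc ℂ A A A).symm (u ⊗ₜ[ℂ] Z)))
        = sliceL ψ (Δ a * (u ⊗ₜ[ℂ] (1:A)))
            * LinearMap.mul' ℂ A (TensorProduct.map LinearMap.id S Z) := by
    intro u Z
    induction Z using TensorProduct.induction_on with
    | zero => simp
    | tmul x y =>
      simp only [TensorProduct.assoc_symm_tmul, TensorProduct.map_tmul,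
        LinearMap.mul'_apply, LinearMap.id_apply, hg, LinearMap.comp_apply,
        LinearMap.mulLeft_apply]
      rw [sliceL_factor, mul_assoc]
    | add x y hx hy =>
      simp only [TensorProduct.tmul_add, map_add, mul_add, hx, hy]
  -- step 6: contract with Goal A
  have step6 : ∀ Y : A ⊗[ℂ] A,
      LinearMap.mul' ℂ A (TensorProduct.map g S
          ((TensorProduct.assoc ℂ A A A).symm (TensorProduct.map LinearMap.id Δ.toLinearMap Y)))
        = FpL Δ ψ a (sliceR ε Y) := by
    intro Y
    induction Y using TensorProduct.induction_on with
    | zero => simp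
    | tmul u v =>
      rw [TensorProduct.map_tmul, LinearMap.id_apply, AlgHom.toLinearMap_apply, step5 u (Δ v),
        hgoalA v, sliceR_tmul, map_smul, FpL_apply]
      simp [mul_smul_comm]
    | add u v hu hv => simp only [map_add, hu, hv]
  rw [step1, step2 (Δ b), step3 (Δ b), hco, step6 (Δ b), hcounitL b, FpL_apply]

lemma mulFp (a : A) (Y : A ⊗[ℂ] A) :
    LinearMap.mul' ℂ A (TensorProduct.map (FpL Δ ψ a) LinearMap.id Y)
      = sliceL ψ (Δ a * Y) := by
  induction Y using TensorProduct.induction_on with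
  | zero => simp
  | tmul u v =>
    rw [TensorProduct.map_tmul, LinearMap.mul'_apply, LinearMap.id_apply, FpL_apply,
      ← sliceL_factor]
  | add u v hu hv => simp only [map_add, mul_add, hu, hv]

lemma goalB (hΔ : IsCoassoc Δ) (hψ2 : ∀ a : A, sliceL ψ (Δ a) = ψ a • (1:A))
    (hgoalA : ∀ a : A, LinearMap.mul' ℂ A (TensorProduct.map LinearMap.id S (Δ a)) = ε a • (1:A))
    (hcounitL : ∀ a : A, sliceR ε (Δ a) = a)
    (hspan' : Submodule.span ℂ
      {y : A | ∃ a b : A, y = sliceL ψ ((a ⊗ₜ[ℂ] (1:A)) * Δ b)} = ⊤) :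
    ∀ a : A, LinearMap.mul' ℂ A (TensorProduct.map S LinearMap.id (Δ a)) = ε a • (1:A) := by
  set κ : A →ₗ[ℂ] A :=
    (LinearMap.mul' ℂ A ∘ₗ TensorProduct.map S LinearMap.id ∘ₗ Δ.toLinearMap)
      - (LinearMap.toSpanSingleton ℂ A 1 ∘ₗ ε) with hκ
  have hgen : ∀ x ∈ Submodule.span ℂ
      {y : A | ∃ a b : A, y = sliceL ψ ((a ⊗ₜ[ℂ] (1:A)) * Δ b)}, κ x = 0 := by
    intro x hx
    refine Submodule.span_induction ?_ (by simp) (fun y z _ _ hy hz => by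
      rw [map_add, hy, hz, add_zero]) (fun c y _ hy => by rw [map_smul, hy, smul_zero]) hx
    rintro y ⟨a, b, rfl⟩
    simp only [hκ, LinearMap.sub_apply, LinearMap.comp_apply, AlgHom.toLinearMap_apply,
      LinearMap.toSpanSingleton_apply]
    have h1 := deltaEp Δ ψ hΔ a b
    simp only [AlgHom.toLinearMap_apply] at h1
    rw [h1]
    have h2 : TensorProduct.map S (LinearMap.id : A →ₗ[ℂ] A)
          (TensorProduct.map (EpL Δ ψ a) LinearMap.id (Δ b))
        = TensorProduct.map (FpL Δ ψ a) LinearMap.id (Δ b) := by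
      have hcomp : TensorProduct.map S (LinearMap.id : A →ₗ[ℂ] A) ∘ₗ
            TensorProduct.map (EpL Δ ψ a) (LinearMap.id : A →ₗ[ℂ] A)
          = TensorProduct.map (S ∘ₗ EpL Δ ψ a) (LinearMap.id : A →ₗ[ℂ] A) := by
        apply TensorProduct.ext'
        intro x y
        simp
      have hSE : S ∘ₗ EpL Δ ψ a = FpL Δ ψ a := by
        apply LinearMap.ext
        intro x
        simpa using KL Δ ψ ε S hΔ hψ2 hgoalA hcounitL a x
      calc TensorProduct.map S LinearMap.id (TensorProduct.map (EpL Δ ψ a) LinearMap.id (Δ b))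
          = (TensorProduct.map S (LinearMap.id : A →ₗ[ℂ] A) ∘ₗ
              TensorProduct.map (EpL Δ ψ a) (LinearMap.id : A →ₗ[ℂ] A)) (Δ b) := rfl
        _ = TensorProduct.map (FpL Δ ψ a) LinearMap.id (Δ b) := by rw [hcomp, hSE]
    rw [h2, mulFp, ← map_mul, hψ2, epsEp Δ ψ ε hcounitL a b, sub_self]
  intro a
  have := hgen a (hspan' ▸ Submodule.mem_top)
  simp only [hκ, LinearMap.sub_apply, LinearMap.comp_apply, AlgHom.toLinearMap_apply,
    LinearMap.toSpanSingleton_apply] at this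
  exact sub_eq_zero.mp this

lemma conv_assoc (f g h : A →ₗ[ℂ] A) (W : A ⊗[ℂ] (A ⊗[ℂ] A)) :
    LinearMap.mul' ℂ A (TensorProduct.map f
        (LinearMap.mul' ℂ A ∘ₗ TensorProduct.map g h) W)
      = LinearMap.mul' ℂ A (TensorProduct.map (LinearMap.mul' ℂ A ∘ₗ TensorProduct.map f g) h
          ((TensorProduct.assoc ℂ A A A).symm W)) := by
  induction W using TensorProduct.induction_on with
  | zero => simp
  | tmul x U =>
    induction U using TensorProduct.induction_on with
    | zero => simp
    | tmul y z => simp [TensorProduct.assoc_symm_tmul, mul_assoc]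
    | add u v hu hv => simp only [TensorProduct.tmul_add, map_add, mul_add, hu, hv]
  | add u v hu hv => simp only [map_add, hu, hv]

lemma u2 (R : A →ₗ[ℂ] A) (Y : A ⊗[ℂ] A) :
    LinearMap.mul' ℂ A (TensorProduct.map R (LinearMap.toSpanSingleton ℂ A 1 ∘ₗ ε) Y)
      = R (sliceR ε Y) := by
  induction Y using TensorProduct.induction_on with
  | zero => simp
  | tmul x y => simp [mul_smul_comm]
  | add u v hu hv => simp only [map_add, hu, hv]

lemma u3 (R : A →ₗ[ℂ] A) (Y : A ⊗[ℂ] A) :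
    LinearMap.mul' ℂ A (TensorProduct.map (LinearMap.toSpanSingleton ℂ A 1 ∘ₗ ε) R Y)
      = R (sliceL ε Y) := by
  induction Y using TensorProduct.induction_on with
  | zero => simp
  | tmul x y => simp [smul_mul_assoc]
  | add u v hu hv => simp only [map_add, hu, hv]

lemma map_factor_right (f : A →ₗ[ℂ] A) (h : A ⊗[ℂ] A →ₗ[ℂ] A) (Y : A ⊗[ℂ] A) :
    TensorProduct.map f h (TensorProduct.map LinearMap.id Δ.toLinearMap Y)
      = TensorProduct.map f (h ∘ₗ Δ.toLinearMap) Y := by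
  induction Y using TensorProduct.induction_on with
  | zero => simp
  | tmul x y => simp
  | add u v hu hv => simp only [map_add, hu, hv]

lemma map_factor_left (f : A ⊗[ℂ] A →ₗ[ℂ] A) (h : A →ₗ[ℂ] A) (Y : A ⊗[ℂ] A) :
    TensorProduct.map f h (TensorProduct.map Δ.toLinearMap LinearMap.id Y)
      = TensorProduct.map (f ∘ₗ Δ.toLinearMap) h Y := by
  induction Y using TensorProduct.induction_on with
  | zero => simp
  | tmul x y => simp
  | add u v hu hv => simp only [map_add, hu, hv]

/-- Any left convolution inverse of the identity equals `S`, given Goal A. -/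
lemma uniq_left (hΔ : IsCoassoc Δ)
    (hcounitL : ∀ a : A, sliceR ε (Δ a) = a)
    (hcounitR : ∀ a : A, sliceL ε (Δ a) = a)
    (hgoalA : ∀ a : A, LinearMap.mul' ℂ A (TensorProduct.map LinearMap.id S (Δ a)) = ε a • (1:A))
    (R : A →ₗ[ℂ] A)
    (hR : ∀ a : A, LinearMap.mul' ℂ A (TensorProduct.map R LinearMap.id (Δ a)) = ε a • (1:A)) :
    R = S := by
  apply LinearMap.ext
  intro a
  have hco : TensorProduct.map Δ.toLinearMap LinearMap.id (Δ a)
      = (TensorProduct.assoc ℂ A A A).symm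
          (TensorProduct.map LinearMap.id Δ.toLinearMap (Δ a)) := by
    rw [← hΔ a, LinearEquiv.symm_apply_apply]
  set X3 := TensorProduct.map LinearMap.id Δ.toLinearMap (Δ a) with hX3
  have E1 : LinearMap.mul' ℂ A (TensorProduct.map R
      (LinearMap.mul' ℂ A ∘ₗ TensorProduct.map LinearMap.id S) X3) = R a := by
    rw [hX3, map_factor_right]
    have : (LinearMap.mul' ℂ A ∘ₗ TensorProduct.map LinearMap.id S) ∘ₗ Δ.toLinearMap
        = LinearMap.toSpanSingleton ℂ A 1 ∘ₗ ε := by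
      apply LinearMap.ext
      intro x
      simpa using hgoalA x
    rw [this, u2 ε R, hcounitL a]
  have E2 : LinearMap.mul' ℂ A (TensorProduct.map R
      (LinearMap.mul' ℂ A ∘ₗ TensorProduct.map LinearMap.id S) X3) = S a := by
    rw [conv_assoc, hX3, ← hco, map_factor_left]
    have : (LinearMap.mul' ℂ A ∘ₗ TensorProduct.map R LinearMap.id) ∘ₗ Δ.toLinearMap
        = LinearMap.toSpanSingleton ℂ A 1 ∘ₗ ε := by
      apply LinearMap.ext
      intro x
      simpa using hR x
    rw [this, u3 ε S, hcounitR a]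
  rw [← E1, E2]

/-- Any right convolution inverse of the identity equals `S`, given Goal B. -/
lemma uniq_right (hΔ : IsCoassoc Δ)
    (hcounitL : ∀ a : A, sliceR ε (Δ a) = a)
    (hcounitR : ∀ a : A, sliceL ε (Δ a) = a)
    (hgoalB : ∀ a : A, LinearMap.mul' ℂ A (TensorProduct.map S LinearMap.id (Δ a)) = ε a • (1:A))
    (R : A →ₗ[ℂ] A)
    (hR : ∀ a : A, LinearMap.mul' ℂ A (TensorProduct.map LinearMap.id R (Δ a)) = ε a • (1:A)) :
    R = S := by
  apply LinearMap.ext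
  intro a
  have hco : TensorProduct.map Δ.toLinearMap LinearMap.id (Δ a)
      = (TensorProduct.assoc ℂ A A A).symm
          (TensorProduct.map LinearMap.id Δ.toLinearMap (Δ a)) := by
    rw [← hΔ a, LinearEquiv.symm_apply_apply]
  set X3 := TensorProduct.map LinearMap.id Δ.toLinearMap (Δ a) with hX3
  have E1 : LinearMap.mul' ℂ A (TensorProduct.map S
      (LinearMap.mul' ℂ A ∘ₗ TensorProduct.map LinearMap.id R) X3) = S a := by
    rw [hX3, map_factor_right]
    have : (LinearMap.mul' ℂ A ∘ₗ TensorProduct.map LinearMap.id R) ∘ₗ Δ.toLinearMap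
        = LinearMap.toSpanSingleton ℂ A 1 ∘ₗ ε := by
      apply LinearMap.ext
      intro x
      simpa using hR x
    rw [this, u2 ε S, hcounitL a]
  have E2 : LinearMap.mul' ℂ A (TensorProduct.map S
      (LinearMap.mul' ℂ A ∘ₗ TensorProduct.map LinearMap.id R) X3) = R a := by
    rw [conv_assoc, hX3, ← hco, map_factor_left]
    have : (LinearMap.mul' ℂ A ∘ₗ TensorProduct.map S LinearMap.id) ∘ₗ Δ.toLinearMap
        = LinearMap.toSpanSingleton ℂ A 1 ∘ₗ ε := by
      apply LinearMap.ext
      intro x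
      simpa using hgoalB x
    rw [this, u3 ε R, hcounitR a]
  rw [← E2, E1]

end Main

end VDAux

/-- The maps `ε` and `S` constructed from the integral satisfy the antipode identities
`m(id ⊗ S)Δ(a) = ε(a)·1` and `m(S ⊗ id)Δ(a) = ε(a)·1`, and `S` is the unique linear map
satisfying either of them. -/
theorem antipode_identities_and_uniqueness
    (Δ : A →ₐ[ℂ] A ⊗[ℂ] A) (hΔ : IsCoassoc Δ) (hfull : IsFull Δ)
    (φ : A →ₗ[ℂ] ℂ) (hφ : IsLeftIntegral Δ φ) (hφf : IsFaithful φ)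
    (ψ : A →ₗ[ℂ] ℂ) (hψ : IsRightIntegral Δ ψ) (hψf : IsFaithful ψ)
    (ε : A →ₗ[ℂ] ℂ)
    (hε : ∀ a b : A, ε (sliceR φ (Δ a * ((1 : A) ⊗ₜ[ℂ] b))) = φ (a * b))
    (S : A →ₗ[ℂ] A)
    (hS : ∀ a b : A, S (sliceR φ (Δ a * ((1 : A) ⊗ₜ[ℂ] b))) =
      sliceR φ (((1 : A) ⊗ₜ[ℂ] a) * Δ b)) :
    (∀ a : A,
      LinearMap.mul' ℂ A (TensorProduct.map LinearMap.id S (Δ a)) = ε a • (1 : A)) ∧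
    (∀ a : A,
      LinearMap.mul' ℂ A (TensorProduct.map S LinearMap.id (Δ a)) = ε a • (1 : A)) ∧
    (∀ R : A →ₗ[ℂ] A,
      (∀ a : A,
        LinearMap.mul' ℂ A (TensorProduct.map LinearMap.id R (Δ a)) = ε a • (1 : A)) →
      R = S) ∧
    (∀ R : A →ₗ[ℂ] A,
      (∀ a : A,
        LinearMap.mul' ℂ A (TensorProduct.map R LinearMap.id (Δ a)) = ε a • (1 : A)) →
      R = S) := by
  obtain ⟨hL, hRfull⟩ := hfull
  have hspan := VDAux.span_E_top Δ φ hL hφf.2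
  have hspan' := VDAux.span_Ep_top Δ ψ hRfull hψf.1
  have hgoalA := VDAux.goalA Δ φ ε S hΔ hφ.2 hε hS hspan
  have hcounitL := VDAux.counitL Δ φ ε hΔ hε hspan
  have hcounitR := VDAux.counitR Δ ψ ε hΔ hcounitL hspan'
  have hgoalB := VDAux.goalB Δ ψ ε S hΔ hψ.2 hgoalA hcounitL hspan'
  exact ⟨hgoalA, hgoalB,
    fun R hR' => VDAux.uniq_right Δ ε S hΔ hcounitL hcounitR hgoalB R hR',
    fun R hR' => VDAux.uniq_left Δ ε S hΔ hcounitL hcounitR hgoalA R hR'⟩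
end
end

section
/- Let A be an associative unital algebra over ℂ with a comultiplication Δ whose right leg is all of A, and let h ∈ A be a left cointegral such that the left leg of Δ(h) is all of A. Then the linear map T₂ : A ⊗ A → A ⊗ A determined by T₂(a ⊗ b) = (a ⊗ 1)Δ(b) is injective. -/
open TensorProduct

noncomputable section

variable {A : Type*} [Ring A] [Algebra ℂ A]

/-!
Write `ω ⇀ a = (id ⊗ ω) Δ(a)` (`comulSliceRight`). The slices `id ⊗ ω` jointly detect zero
in `A ⊗ A`, so `T₂ x = 0` says `Σ aᵢ (ω ⇀ bᵢ) = 0` for all `ω`; by coassociativity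
`μ ⇀ (ω ⇀ b)` is again of the form `ν ⇀ b`, so `T₂` also kills `(id ⊗ (ω ⇀ ·)) x`.

Applying `Δ ⊗ id` to `T₂ x`, multiplying by `1 ⊗ Δ(h)` and using `Δ(b)(1 ⊗ h) = b ⊗ h` turns
`T₂ x = 0` into `T₁' x · (1 ⊗ c) = 0` for every `c` in the left leg of `Δ(h)`, in particular
for `c = 1`. Applied to `(id ⊗ (ω ⇀ ·)) x` and sliced by `ρ`, this gives
`Σ (ρ ⇀ aᵢ)(ω ⇀ bᵢ) = 0` for all `ρ, ω`.

Since the right leg of `Δ` is `A`, and left and right slices of `Δ` commute, the cointegral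
identity upgrades to `(ω ⇀ c) h = ω(c) h`. Multiplying by `h` on the right therefore gives
`ρ((id ⊗ ω) x) h = 0`, and `h ≠ 0` forces `x = 0`.
-/

open LinearMap

section Slices

variable {R M N P : Type*} [CommSemiring R] [AddCommMonoid M] [Module R M]
  [AddCommMonoid N] [Module R N] [AddCommMonoid P] [Module R P]

def sliceRight (ω : N →ₗ[R] R) : M ⊗[R] N →ₗ[R] M :=
  (TensorProduct.rid R M).toLinearMap ∘ₗ ω.lTensor M

def sliceLeft (ρ : M →ₗ[R] R) : M ⊗[R] N →ₗ[R] N :=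
  (TensorProduct.lid R N).toLinearMap ∘ₗ ρ.rTensor N

@[simp]
lemma sliceRight_tmul (ω : N →ₗ[R] R) (m : M) (n : N) : sliceRight ω (m ⊗ₜ[R] n) = ω n • m := by
  simp [sliceRight]

@[simp]
lemma sliceLeft_tmul (ρ : M →ₗ[R] R) (m : M) (n : N) : sliceLeft ρ (m ⊗ₜ[R] n) = ρ m • n := by
  simp [sliceLeft]

lemma apply_sliceRight_eq_apply_sliceLeft (ρ : M →ₗ[R] R) (ω : N →ₗ[R] R) (u : M ⊗[R] N) :
    ρ (sliceRight ω u) = ω (sliceLeft ρ u) := by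
  induction u using TensorProduct.induction_on with
  | zero => simp
  | tmul m n => simp [mul_comm]
  | add u v hu hv => simp [hu, hv]

lemma sliceRight_rTensor {M' : Type*} [AddCommMonoid M'] [Module R M'] (f : M →ₗ[R] M')
    (ω : N →ₗ[R] R) (u : M ⊗[R] N) : sliceRight ω (f.rTensor N u) = f (sliceRight ω u) := by
  induction u using TensorProduct.induction_on with
  | zero => simp
  | tmul m n => simp
  | add u v hu hv => simp [hu, hv]

lemma sliceLeft_lTensor {N' : Type*} [AddCommMonoid N'] [Module R N'] (g : N →ₗ[R] N')
    (ρ : M →ₗ[R] R) (u : M ⊗[R] N) : sliceLeft ρ (g.lTensor M u) = g (sliceLeft ρ u) := by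
  induction u using TensorProduct.induction_on with
  | zero => simp
  | tmul m n => simp
  | add u v hu hv => simp [hu, hv]

lemma sliceRight_lTensor {N' : Type*} [AddCommMonoid N'] [Module R N'] (g : N →ₗ[R] N')
    (ω : N' →ₗ[R] R) (u : M ⊗[R] N) : sliceRight ω (g.lTensor M u) = sliceRight (ω ∘ₗ g) u := by
  induction u using TensorProduct.induction_on with
  | zero => simp
  | tmul m n => simp
  | add u v hu hv => simp [hu, hv]

lemma sliceRight_sliceRight (ω : N →ₗ[R] R) (μ : P →ₗ[R] R) (u : M ⊗[R] N ⊗[R] P) :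
    sliceRight ω (sliceRight μ u) =
      sliceRight (mul' R R ∘ₗ TensorProduct.map ω μ) (TensorProduct.assoc R M N P u) := by
  have : sliceRight ω ∘ₗ sliceRight μ =
      sliceRight (mul' R R ∘ₗ TensorProduct.map ω μ) ∘ₗ (TensorProduct.assoc R M N P).toLinearMap :=
    TensorProduct.ext_threefold fun m n p => by simp [smul_smul, mul_comm]
  exact LinearMap.congr_fun this u

lemma sliceRight_sliceLeft (ρ : M →ₗ[R] R) (ω : P →ₗ[R] R) (u : M ⊗[R] (N ⊗[R] P)) :
    sliceRight ω (sliceLeft ρ u) =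
      sliceLeft ρ (sliceRight ω ((TensorProduct.assoc R M N P).symm u)) := by
  have : sliceRight ω ∘ₗ sliceLeft ρ =
      sliceLeft ρ ∘ₗ sliceRight ω ∘ₗ (TensorProduct.assoc R M N P).symm.toLinearMap :=
    TensorProduct.ext_threefold' fun m n p => by simp [smul_smul, mul_comm]
  exact LinearMap.congr_fun this u

lemma eq_zero_of_forall_sliceRight_eq_zero [Module.Free R N] {u : M ⊗[R] N}
    (hu : ∀ ω : N →ₗ[R] R, sliceRight ω u = 0) : u = 0 := by
  classical
  let b := Module.Free.chooseBasis R N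
  let e := (TensorProduct.congr (LinearEquiv.refl R M) b.repr).trans
    (TensorProduct.finsuppScalarRight R R M _)
  have he (i) : Finsupp.lapply i ∘ₗ e.toLinearMap = sliceRight (b.coord i) :=
    TensorProduct.ext' fun m n => by simp [e]
  exact e.map_eq_zero_iff.mp (Finsupp.ext fun i => (LinearMap.congr_fun (he i) u).trans (hu _))

end Slices

section AlgebraSlices

variable {R M N P : Type*} [CommSemiring R] [Semiring M] [Algebra R M] [Semiring N] [Algebra R N]
  [Semiring P] [Algebra R P]

lemma sliceRight_tmul_one_mul (ω : N →ₗ[R] R) (m : M) (u : M ⊗[R] N) :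
    sliceRight ω ((m ⊗ₜ[R] (1 : N)) * u) = m * sliceRight ω u := by
  induction u using TensorProduct.induction_on with
  | zero => simp
  | tmul m' n => simp
  | add u v hu hv => simp [mul_add, hu, hv]

lemma sliceRight_mul_tmul_one (ω : N →ₗ[R] R) (m : M) (u : M ⊗[R] N) :
    sliceRight ω (u * (m ⊗ₜ[R] (1 : N))) = sliceRight ω u * m := by
  induction u using TensorProduct.induction_on with
  | zero => simp
  | tmul m' n => simp
  | add u v hu hv => simp [add_mul, hu, hv]

lemma sliceLeft_mul_one_tmul (ρ : M →ₗ[R] R) (n : N) (u : M ⊗[R] N) :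
    sliceLeft ρ (u * ((1 : M) ⊗ₜ[R] n)) = sliceLeft ρ u * n := by
  induction u using TensorProduct.induction_on with
  | zero => simp
  | tmul m n' => simp
  | add u v hu hv => simp [add_mul, hu, hv]

lemma lTensor_sliceRight_assoc_tmul_one_mul (ω : P →ₗ[R] R) (v : M ⊗[R] N) (m : M)
    (w : N ⊗[R] P) :
    (sliceRight ω).lTensor M (TensorProduct.assoc R M N P (v ⊗ₜ[R] (1 : P)) * (m ⊗ₜ[R] w)) =
      v * (m ⊗ₜ[R] sliceRight ω w) := by
  induction v using TensorProduct.induction_on with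
  | zero => simp
  | tmul m' n => simp [sliceRight_tmul_one_mul]
  | add u v hu hv => simp [TensorProduct.add_tmul, add_mul, hu, hv]

end AlgebraSlices

section Comultiplication

variable (Δ : A →ₐ[ℂ] A ⊗[ℂ] A)

def comulSliceRight (ω : A →ₗ[ℂ] ℂ) : A →ₗ[ℂ] A := sliceRight ω ∘ₗ Δ.toLinearMap

def comulSliceLeft (ρ : A →ₗ[ℂ] ℂ) : A →ₗ[ℂ] A := sliceLeft ρ ∘ₗ Δ.toLinearMap

@[simp]
lemma comulSliceRight_apply (ω : A →ₗ[ℂ] ℂ) (a : A) :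
    comulSliceRight Δ ω a = sliceRight ω (Δ a) := rfl

@[simp]
lemma comulSliceLeft_apply (ρ : A →ₗ[ℂ] ℂ) (a : A) :
    comulSliceLeft Δ ρ a = sliceLeft ρ (Δ a) := rfl

variable {Δ}

lemma IsCoassoc.lTensor_comul (hΔ : IsCoassoc Δ) (a : A) :
    Δ.toLinearMap.lTensor A (Δ a) =
      TensorProduct.assoc ℂ A A A (Δ.toLinearMap.rTensor A (Δ a)) :=
  (hΔ a).symm

lemma comulSliceRight_comulSliceRight (hΔ : IsCoassoc Δ) (μ ω : A →ₗ[ℂ] ℂ) (a : A) :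
    comulSliceRight Δ μ (comulSliceRight Δ ω a) =
      comulSliceRight Δ (mul' ℂ ℂ ∘ₗ TensorProduct.map μ ω ∘ₗ Δ.toLinearMap) a := by
  simp only [comulSliceRight_apply]
  rw [← AlgHom.toLinearMap_apply, ← sliceRight_rTensor, sliceRight_sliceRight,
    ← hΔ.lTensor_comul, sliceRight_lTensor, LinearMap.comp_assoc]

lemma comulSliceRight_comulSliceLeft (hΔ : IsCoassoc Δ) (ω ρ : A →ₗ[ℂ] ℂ) (a : A) :
    comulSliceRight Δ ω (comulSliceLeft Δ ρ a) = comulSliceLeft Δ ρ (comulSliceRight Δ ω a) := by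
  simp only [comulSliceRight_apply, comulSliceLeft_apply]
  rw [← AlgHom.toLinearMap_apply, ← sliceLeft_lTensor, sliceRight_sliceLeft, hΔ.lTensor_comul,
    LinearEquiv.symm_apply_apply, sliceRight_rTensor, AlgHom.toLinearMap_apply]

lemma sliceRight_T2 (ω : A →ₗ[ℂ] ℂ) (x : A ⊗[ℂ] A) :
    sliceRight ω (T2 Δ x) = mul' ℂ A ((comulSliceRight Δ ω).lTensor A x) := by
  induction x using TensorProduct.induction_on with
  | zero => simp
  | tmul a b => simp [T2, sliceRight_tmul_one_mul]
  | add x y hx hy => simp [hx, hy]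

lemma sliceRight_T1' (ρ : A →ₗ[ℂ] ℂ) (x : A ⊗[ℂ] A) :
    sliceRight ρ (T1' Δ x) = mul' ℂ A ((comulSliceRight Δ ρ).rTensor A x) := by
  induction x using TensorProduct.induction_on with
  | zero => simp
  | tmul a b => simp [T1', sliceRight_mul_tmul_one]
  | add x y hx hy => simp [hx, hy]

lemma T2_lTensor_comulSliceRight_eq_zero (hΔ : IsCoassoc Δ) {x : A ⊗[ℂ] A} (hx : T2 Δ x = 0)
    (ω : A →ₗ[ℂ] ℂ) : T2 Δ ((comulSliceRight Δ ω).lTensor A x) = 0 := by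
  refine eq_zero_of_forall_sliceRight_eq_zero fun μ => ?_
  have hcomp : comulSliceRight Δ μ ∘ₗ comulSliceRight Δ ω =
      comulSliceRight Δ (mul' ℂ ℂ ∘ₗ TensorProduct.map μ ω ∘ₗ Δ.toLinearMap) :=
    LinearMap.ext (comulSliceRight_comulSliceRight hΔ μ ω)
  rw [sliceRight_T2, ← LinearMap.comp_apply (lTensor A _), ← lTensor_comp, hcomp,
    ← sliceRight_T2, hx, map_zero]

variable {h : A}

lemma comulSliceRight_mul_eq_smul (hΔ : IsCoassoc Δ) (hh : ∀ a, Δ a * ((1 : A) ⊗ₜ[ℂ] h) = a ⊗ₜ[ℂ] h)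
    (hleg : rightLeg Δ = ⊤) (ω : A →ₗ[ℂ] ℂ) (c : A) :
    comulSliceRight Δ ω c * h = ω c • h := by
  let f : A →ₗ[ℂ] A := mulRight ℂ h ∘ₗ comulSliceRight Δ ω - ω.smulRight h
  suffices rightLeg Δ ≤ ker f by
    simpa [f, sub_eq_zero] using this (hleg ▸ Submodule.mem_top : c ∈ rightLeg Δ)
  refine Submodule.span_le.mpr ?_
  rintro _ ⟨a, ρ, rfl⟩
  suffices comulSliceRight Δ ω (comulSliceLeft Δ ρ a) * h = ω (comulSliceLeft Δ ρ a) • h by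
    simpa [f, sub_eq_zero]
  calc comulSliceRight Δ ω (comulSliceLeft Δ ρ a) * h
      = comulSliceLeft Δ ρ (comulSliceRight Δ ω a) * h := by
        rw [comulSliceRight_comulSliceLeft hΔ]
    _ = sliceLeft ρ (comulSliceRight Δ ω a ⊗ₜ[ℂ] h) := by
        rw [comulSliceLeft_apply, ← sliceLeft_mul_one_tmul, hh]
    _ = ω (comulSliceLeft Δ ρ a) • h := by
        simp [apply_sliceRight_eq_apply_sliceLeft]

lemma assoc_rTensor_T2_tmul_mul_one_tmul (hΔ : IsCoassoc Δ)
    (hh : ∀ a, Δ a * ((1 : A) ⊗ₜ[ℂ] h) = a ⊗ₜ[ℂ] h) (a b : A) :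
    TensorProduct.assoc ℂ A A A (Δ.toLinearMap.rTensor A (T2 Δ (a ⊗ₜ[ℂ] b))) *
        ((1 : A) ⊗ₜ[ℂ] Δ h) =
      TensorProduct.assoc ℂ A A A (Δ a ⊗ₜ[ℂ] (1 : A)) * (b ⊗ₜ[ℂ] Δ h) := by
  have rTensor_mul (u v : A ⊗[ℂ] A) : Δ.toLinearMap.rTensor A (u * v) =
      Δ.toLinearMap.rTensor A u * Δ.toLinearMap.rTensor A v :=
    map_mul (Algebra.TensorProduct.map Δ (AlgHom.id ℂ A)) u v
  have lTensor_mul (u v : A ⊗[ℂ] A) : Δ.toLinearMap.lTensor A (u * v) =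
      Δ.toLinearMap.lTensor A u * Δ.toLinearMap.lTensor A v :=
    map_mul (Algebra.TensorProduct.map (AlgHom.id ℂ A) Δ) u v
  have assoc_mul (u v : A ⊗[ℂ] A ⊗[ℂ] A) : TensorProduct.assoc ℂ A A A (u * v) =
      TensorProduct.assoc ℂ A A A u * TensorProduct.assoc ℂ A A A v :=
    map_mul (Algebra.TensorProduct.assoc ℂ ℂ ℂ A A A) u v
  calc
    _ = TensorProduct.assoc ℂ A A A (Δ a ⊗ₜ[ℂ] (1 : A)) *
        (Δ.toLinearMap.lTensor A (Δ b) * Δ.toLinearMap.lTensor A ((1 : A) ⊗ₜ[ℂ] h)) := by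
      simp [T2, rTensor_mul, assoc_mul, hΔ.lTensor_comul, mul_assoc]
    _ = _ := by rw [← lTensor_mul, hh, lTensor_tmul, AlgHom.toLinearMap_apply]

lemma T1'_mul_one_tmul_comulSliceRight (hΔ : IsCoassoc Δ)
    (hh : ∀ a, Δ a * ((1 : A) ⊗ₜ[ℂ] h) = a ⊗ₜ[ℂ] h) (ω : A →ₗ[ℂ] ℂ) (x : A ⊗[ℂ] A) :
    T1' Δ x * ((1 : A) ⊗ₜ[ℂ] comulSliceRight Δ ω h) =
      (sliceRight ω).lTensor A
        (TensorProduct.assoc ℂ A A A (Δ.toLinearMap.rTensor A (T2 Δ x)) * ((1 : A) ⊗ₜ[ℂ] Δ h)) := by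
  induction x using TensorProduct.induction_on with
  | zero => simp
  | tmul a b =>
    rw [assoc_rTensor_T2_tmul_mul_one_tmul hΔ hh, lTensor_sliceRight_assoc_tmul_one_mul]
    simp [T1', mul_assoc]
  | add x y hx hy => simp only [map_add, add_mul, hx, hy]

lemma ker_T2_le_ker_T1' (hΔ : IsCoassoc Δ) (hh : ∀ a, Δ a * ((1 : A) ⊗ₜ[ℂ] h) = a ⊗ₜ[ℂ] h)
    (hfaith : leftLegOf (Δ h) = ⊤) : ker (T2 Δ) ≤ ker (T1' Δ) := by
  intro y hy
  let f : A →ₗ[ℂ] A ⊗[ℂ] A := mulLeft ℂ (T1' Δ y) ∘ₗ TensorProduct.mk ℂ A A 1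
  have hleg : leftLegOf (Δ h) ≤ ker f := by
    refine Submodule.span_le.mpr ?_
    rintro _ ⟨ω, rfl⟩
    change T1' Δ y * ((1 : A) ⊗ₜ[ℂ] comulSliceRight Δ ω h) = 0
    rw [T1'_mul_one_tmul_comulSliceRight hΔ hh, mem_ker.mp hy]
    simp
  simpa [f, ← Algebra.TensorProduct.one_def] using hleg (hfaith ▸ Submodule.mem_top : (1 : A) ∈ _)

lemma mul'_map_comulSliceRight_mul_eq_smul (hΔ : IsCoassoc Δ)
    (hh : ∀ a, Δ a * ((1 : A) ⊗ₜ[ℂ] h) = a ⊗ₜ[ℂ] h) (hleg : rightLeg Δ = ⊤)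
    (ρ ω : A →ₗ[ℂ] ℂ) (x : A ⊗[ℂ] A) :
    mul' ℂ A (TensorProduct.map (comulSliceRight Δ ρ) (comulSliceRight Δ ω) x) * h =
      ρ (sliceRight ω x) • h := by
  induction x using TensorProduct.induction_on with
  | zero => simp
  | tmul a b =>
    simp only [TensorProduct.map_tmul, mul'_apply, mul_assoc,
      comulSliceRight_mul_eq_smul hΔ hh hleg, mul_smul_comm, sliceRight_tmul, map_smul, smul_smul,
      smul_eq_mul, mul_comm]
  | add x y hx hy => simp [add_mul, hx, hy, add_smul]

end Comultiplication

/-- If the right leg of `Δ` is all of `A` and `h` is a left cointegral with the left leg of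
`Δ(h)` all of `A`, then `T₂ : a ⊗ b ↦ (a ⊗ 1)Δ(b)` is injective. -/
theorem T2_injective_of_left_cointegral
    (Δ : A →ₐ[ℂ] A ⊗[ℂ] A) (hΔ : IsCoassoc Δ) (hleg : rightLeg Δ = ⊤)
    (h : A) (hh : IsLeftCointegral Δ h) (hfaith : leftLegOf (Δ h) = ⊤) :
    Function.Injective (T2 Δ) := by
  obtain ⟨hne, hh⟩ := hh
  refine (injective_iff_map_eq_zero (T2 Δ)).mpr fun x hx => ?_
  have hslices (ρ ω : A →ₗ[ℂ] ℂ) :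
      mul' ℂ A (TensorProduct.map (comulSliceRight Δ ρ) (comulSliceRight Δ ω) x) = 0 := by
    have hT1' := ker_T2_le_ker_T1' hΔ hh hfaith (T2_lTensor_comulSliceRight_eq_zero hΔ hx ω)
    rw [← rTensor_comp_lTensor, comp_apply, ← sliceRight_T1', mem_ker.mp hT1', map_zero]
  have hdual (ρ ω : A →ₗ[ℂ] ℂ) : ρ (sliceRight ω x) = 0 := by
    have := mul'_map_comulSliceRight_mul_eq_smul hΔ hh hleg ρ ω x
    rw [hslices, zero_mul, eq_comm, smul_eq_zero] at this
    exact this.resolve_right hne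
  exact eq_zero_of_forall_sliceRight_eq_zero fun ω =>
    (Module.forall_dual_apply_eq_zero_iff ℂ _).mp fun ρ => hdual ρ ω
end
end
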